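/- Single-measure Röwbottom lemma: if U is a normal ultrafilter on a measurable cardinal κ and f : [κ]^{<ω} → τ with τ < κ, then there exists A ∈ U such that f is constant on [A]^n for each n < ω. -/

import Mathlib

/-!
By induction on `n`, every `g : (Fin n → O) → σ` has a homogeneous set in `U`. For `n + 1`,
pick for each `β` a set `A β ∈ U` homogeneous for `g (Fin.cons β ·)`; by normality the diagonal
intersection `{γ | ∀ β < γ, γ ∈ A β}` lies in `U`. On it, `g v` depends only on `v 0`, and since
fewer than `κ` colours are available, `κ`-completeness makes that colour constant on a set in `U`.
Intersecting the homogeneous sets for the countably many arities finishes the proof.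
-/

open Cardinal Set

/-- `U` is a `κ`-complete normal (nonprincipal) ultrafilter on the linearly ordered set `O`
(which represents the measurable cardinal `κ`). -/
def IsNormalMeasure (κ : Cardinal) {O : Type} [LinearOrder O] (U : Set (Set O)) : Prop :=
  (univ : Set O) ∈ U ∧ (∅ : Set O) ∉ U ∧
  (∀ A B : Set O, A ∈ U → A ⊆ B → B ∈ U) ∧
  (∀ A : Set O, A ∈ U ∨ Aᶜ ∈ U) ∧
  (∀ (ι : Type) (_ : Cardinal.mk ι < κ) (A : ι → Set O), (∀ i, A i ∈ U) → (⋂ i, A i) ∈ U) ∧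
  (∀ A : O → Set O, (∀ β, A β ∈ U) → {γ : O | ∀ β, β < γ → γ ∈ A β} ∈ U) ∧
  (∀ b : O, {x : O | b < x} ∈ U)

def IsHomogeneous {O σ : Type} [LinearOrder O] {n : ℕ} (g : (Fin n → O) → σ) (A : Set O) :
    Prop :=
  ∀ v w : Fin n → O, StrictMono v → StrictMono w → (∀ i, v i ∈ A) → (∀ i, w i ∈ A) → g v = g w

lemma IsHomogeneous.mono {O σ : Type} [LinearOrder O] {n : ℕ} {g : (Fin n → O) → σ}
    {A B : Set O} (hA : IsHomogeneous g A) (hBA : B ⊆ A) : IsHomogeneous g B :=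
  fun v w hv hw hvB hwB => hA v w hv hw (fun i => hBA (hvB i)) (fun i => hBA (hwB i))

namespace IsNormalMeasure

variable {O : Type} [LinearOrder O] {κ : Cardinal} {U : Set (Set O)}

lemma nonempty_of_mem (hU : IsNormalMeasure κ U) {A : Set O} (hA : A ∈ U) : A.Nonempty :=
  nonempty_iff_ne_empty.2 fun h => hU.2.1 (h ▸ hA)

lemma inter_mem (hU : IsNormalMeasure κ U) (hκ : 2 < κ) {A B : Set O} (hA : A ∈ U)
    (hB : B ∈ U) : A ∩ B ∈ U := by
  rw [inter_eq_iInter]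
  exact hU.2.2.2.2.1 Bool (by rwa [mk_bool]) _ (Bool.forall_bool.2 ⟨hB, hA⟩)

lemma infinite_of_mem (hU : IsNormalMeasure κ U) (hκ : 2 < κ) {A : Set O} (hA : A ∈ U) :
    A.Infinite := by
  have : Nonempty O := (hU.nonempty_of_mem hA).to_subtype.map Subtype.val
  refine infinite_of_forall_exists_gt fun a => ?_
  obtain ⟨x, hxA, hax⟩ := hU.nonempty_of_mem (hU.inter_mem hκ hA (hU.2.2.2.2.2.2 a))
  exact ⟨x, hxA, hax⟩

lemma exists_strictMono_mem (hU : IsNormalMeasure κ U) (hκ : 2 < κ) {A : Set O} (hA : A ∈ U)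
    (n : ℕ) : ∃ v : Fin n → O, StrictMono v ∧ ∀ i, v i ∈ A := by
  obtain ⟨t, htA, rfl⟩ := (hU.infinite_of_mem hκ hA).exists_subset_card_eq n
  exact ⟨t.orderEmbOfFin rfl, (t.orderEmbOfFin rfl).strictMono,
    fun i => htA (t.orderEmbOfFin_mem rfl i)⟩

lemma exists_preimage_singleton_mem {σ : Type} (hU : IsNormalMeasure κ U) (hσ : #σ < κ)
    (c : O → σ) : ∃ s, c ⁻¹' {s} ∈ U := by
  by_contra! h
  have hcompl : ∀ s, (c ⁻¹' {s})ᶜ ∈ U := fun s => (hU.2.2.2.1 _).resolve_left (h s)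
  have hempty : (⋂ s, (c ⁻¹' {s})ᶜ) = ∅ :=
    eq_empty_iff_forall_notMem.2 fun x hx => mem_iInter.1 hx (c x) rfl
  exact hU.2.1 (hempty ▸ hU.2.2.2.2.1 σ hσ _ hcompl)

lemma exists_isHomogeneous_cons {σ : Type} (hU : IsNormalMeasure κ U) (hκ : 2 < κ)
    (hσ : #σ < κ) {n : ℕ} (ih : ∀ h : (Fin n → O) → σ, ∃ A ∈ U, IsHomogeneous h A)
    (g : (Fin (n + 1) → O) → σ) : ∃ A ∈ U, IsHomogeneous g A := by
  choose A hAU hA using fun β => ih fun v => g (Fin.cons β v)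
  have hdiag : {γ | ∀ β, β < γ → γ ∈ A β} ∈ U := hU.2.2.2.2.2.1 A hAU
  -- On the diagonal intersection, `g v` equals the colour of the reference tuple
  -- `Fin.cons (v 0) (w (v 0))`, which depends on `v 0` alone.
  choose w hw hwA using fun β => hU.exists_strictMono_mem hκ (hAU β) n
  obtain ⟨s₀, hs₀⟩ := hU.exists_preimage_singleton_mem hσ fun β => g (Fin.cons β (w β))
  have hconst : ∀ v : Fin (n + 1) → O, StrictMono v →
      (∀ i, v i ∈ {γ | ∀ β, β < γ → γ ∈ A β} ∩ (fun β => g (Fin.cons β (w β))) ⁻¹' {s₀}) →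
      g v = s₀ := by
    intro v hv hvX
    have htail : ∀ i, Fin.tail v i ∈ A (v 0) := fun i => (hvX i.succ).1 (v 0) (hv i.succ_pos)
    have hcons : g (Fin.cons (v 0) (Fin.tail v)) = g (Fin.cons (v 0) (w (v 0))) :=
      hA (v 0) _ _ (hv.comp Fin.strictMono_succ) (hw (v 0)) htail (hwA (v 0))
    rw [← Fin.cons_self_tail v, hcons]
    exact (hvX 0).2
  exact ⟨_, hU.inter_mem hκ hdiag hs₀, fun v v' hv hv' hvX hv'X => by
    rw [hconst v hv hvX, hconst v' hv' hv'X]⟩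

lemma exists_isHomogeneous {σ : Type} (hU : IsNormalMeasure κ U) (hκ : 2 < κ) (hσ : #σ < κ)
    (n : ℕ) (g : (Fin n → O) → σ) : ∃ A ∈ U, IsHomogeneous g A := by
  induction n with
  | zero => exact ⟨univ, hU.1, fun v w _ _ _ _ => congrArg g (Subsingleton.elim v w)⟩
  | succ n ih => exact hU.exists_isHomogeneous_cons hκ hσ ih g

end IsNormalMeasure

theorem stmt4_general {O : Type} [LinearOrder O] (κ : Cardinal)
    (hκ : Cardinal.aleph 0 < κ)
    {σ : Type} (hσ : Cardinal.mk σ < κ)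
    (U : Set (Set O)) (hU : IsNormalMeasure κ U)
    (f : {n : ℕ} → (Fin n → O) → σ) :
    ∃ A ∈ U, ∀ (n : ℕ) (v w : Fin n → O),
      StrictMono v → StrictMono w →
      (∀ i, v i ∈ A) → (∀ i, w i ∈ A) → f v = f w := by
  rw [aleph_zero] at hκ
  have h2 : (2 : Cardinal) < κ := (natCast_lt_aleph0 (n := 2)).trans hκ
  choose A hAU hA using fun n => hU.exists_isHomogeneous h2 hσ n f
  refine ⟨⋂ n, A n, hU.2.2.2.2.1 ℕ (mk_nat ▸ hκ) A hAU, fun n => ?_⟩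
  exact (hA n).mono (iInter_subset A n)

/-- Single-measure Röwbottom lemma: if `U` is a normal measure on the measurable cardinal
`κ` (carried by `O`) and `f : [κ]^{<ω} → σ` with `|σ| = τ < κ`, then there is `A ∈ U`
such that `f` is constant on `[A]^n` for every `n < ω`. -/
theorem stmt4 {O : Type} [LinearOrder O] (κ : Cardinal) (hO : Cardinal.mk O = κ)
    (hκ : Cardinal.aleph 0 < κ)
    {σ : Type} (hσ : Cardinal.mk σ < κ)
    (U : Set (Set O)) (hU : IsNormalMeasure κ U)
    (f : {n : ℕ} → (Fin n → O) → σ) :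
    ∃ A ∈ U, ∀ (n : ℕ) (v w : Fin n → O),
      StrictMono v → StrictMono w →
      (∀ i, v i ∈ A) → (∀ i, w i ∈ A) → f v = f w :=
  stmt4_general κ hκ hσ U hU f
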